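/- arXiv:1003.0320 — 2 statements merged into one kernel-verified Lean document; each statement's English description precedes it below -/
import Mathlib

section
/- For fixed j ≥ 1 and each integer s ≥ 0, the s-th moment E(Y_{n,j}^s) of the out-degree of node j in a random ordered increasing k-tree of size n satisfies E(Y_{n,j}^s) / n^{ks/(k+1)} → s!·Γ(j + 1/(k+1)) / Γ(j + 1 + k(s-1)/(k+1)) as n → ∞. -/
open Filter

/-- Generalized binomial coefficient `binom(x, n) = x(x-1)⋯(x-n+1)/n!`. -/
noncomputable def gbinom (x : ℝ) (n : ℕ) : ℝ :=
  (∏ i ∈ Finset.range n, (x - i)) / (Nat.factorial n)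

/-- `P{Y_{n,j} = m}`: the exact distribution of the out-degree of node `j` in a
random ordered increasing `k`-tree of size `n`. -/
noncomputable def Pdeg (k n j m : ℕ) : ℝ :=
  gbinom ((j : ℝ) - k / (k + 1)) j
    / (gbinom ((n : ℝ) - k / (k + 1)) n * (Nat.choose n j : ℝ))
    * ∑ ℓ ∈ Finset.range (m + 1),
        (Nat.choose m ℓ : ℝ) * (-1) ^ ℓ * gbinom ((n : ℝ) - (k : ℝ) * (2 + ℓ) / (k + 1)) (n - j)

/-!
Write `c = k/(k+1)`. The probability `P{Y_{n,j} = m}` is a normalising constant times the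
`m`-th alternating binomial sum of `ℓ ↦ binom(n - c(2+ℓ), n-j)`, a polynomial of degree `n - j`
in `ℓ`; so it vanishes for `m > n - j` and the moments are finite sums. The paper's recurrence
for `T_{n,j,m}` collapses, for the rising factorial moment `E[(Y+1)⋯(Y+s)]`, to the first-order
recurrence `(n - c) M(n) = (n + c(s-1)) M(n-1)` with `M(j) = s!`, whose solution is
`s! Γ(j+1-c) Γ(n+1+c(s-1)) / (Γ(j+1+c(s-1)) Γ(n+1-c)) ~ s! Γ(j+1-c)/Γ(j+1+c(s-1)) · n^{cs}`
by Euler's limit formula for `Γ`. Finally `Y^s` and `(Y+1)⋯(Y+s)` differ by a polynomial of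
degree `< s`, whose moments are `O(n^{c(s-1)}) = o(n^{cs})` because `c > 0`.
-/

open Finset Polynomial Topology

section AltBinomSum

variable {R : Type*} [CommRing R]

/-- `altBinomSum f m = (-1) ^ m Δ^m f 0`, with `Δ` the forward difference. -/
def altBinomSum (f : ℕ → R) (m : ℕ) : R :=
  ∑ ℓ ∈ range (m + 1), (m.choose ℓ : R) * (-1) ^ ℓ * f ℓ

theorem altBinomSum_eval_eq_zero {P : R[X]} {m : ℕ} (h : P.natDegree < m) :
    altBinomSum (fun ℓ => P.eval (ℓ : R)) m = 0 := by
  have hΔ := congr_fun (fwdDiff_iter_eq_zero_of_degree_lt h) 0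
  rw [fwdDiff_iter_eq_sum_shift] at hΔ
  calc altBinomSum (fun ℓ => P.eval (ℓ : R)) m
      = (-1) ^ m * ∑ ℓ ∈ range (m + 1),
          ((-1 : ℤ) ^ (m - ℓ) * m.choose ℓ) • P.eval (0 + ℓ • (1 : R)) := by
        rw [altBinomSum, mul_sum]
        refine sum_congr rfl fun ℓ hℓ => ?_
        have hsign : ((-1 : R) ^ m) * (-1) ^ (m - ℓ) = (-1) ^ ℓ := by
          rw [← pow_add, show m + (m - ℓ) = ℓ + 2 * (m - ℓ) by have := mem_range.mp hℓ; omega,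
            pow_add, pow_mul, neg_one_sq, one_pow, mul_one]
        simp only [zsmul_eq_mul, nsmul_eq_mul, zero_add, mul_one]
        push_cast
        linear_combination (-(m.choose ℓ : R) * P.eval (ℓ : R)) * hsign
    _ = 0 := by rw [hΔ, Pi.zero_apply, mul_zero]

theorem altBinomSum_natCast_mul (f : ℕ → R) (m : ℕ) :
    altBinomSum (fun ℓ => (ℓ : R) * f ℓ) m = m * (altBinomSum f m - altBinomSum f (m - 1)) := by
  cases m with
  | zero => simp [altBinomSum]
  | succ m =>
    have hext : altBinomSum f m = ∑ ℓ ∈ range (m + 2), (m.choose ℓ : R) * (-1) ^ ℓ * f ℓ := by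
      rw [altBinomSum, sum_range_succ _ (m + 1), Nat.choose_succ_self]
      simp
    rw [Nat.add_sub_cancel, hext]
    simp only [altBinomSum, mul_sub, mul_sum, ← sum_sub_distrib]
    refine sum_congr rfl fun ℓ hℓ => ?_
    have hℓ : ℓ ≤ m + 1 := Nat.lt_succ_iff.mp (mem_range.mp hℓ)
    have key := congrArg (Nat.cast : ℕ → R) (Nat.choose_mul_succ_eq m ℓ)
    push_cast [Nat.cast_sub hℓ] at key
    push_cast
    linear_combination ((-1) ^ ℓ * f ℓ) * key

end AltBinomSum

theorem tendsto_div_rpow_of_natDegree_le {E : ℕ → ℝ[X] →ₗ[ℝ] ℝ} {A : ℕ → ℝ[X]} {c : ℝ}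
    {L : ℕ → ℝ} (hc : 0 < c) (hA : ∀ t, (A t).Monic) (hAdeg : ∀ t, (A t).natDegree = t)
    (hE : ∀ t, Tendsto (fun n : ℕ => E n (A t) / (n : ℝ) ^ (c * t)) atTop (𝓝 (L t)))
    (d : ℕ) {p : ℝ[X]} (hp : p.natDegree ≤ d) :
    Tendsto (fun n : ℕ => E n p / (n : ℝ) ^ (c * d)) atTop (𝓝 (p.coeff d * L d)) := by
  induction d using Nat.strong_induction_on generalizing p with
  | _ d ih =>
    set q := p - C (p.coeff d) * A d
    have hq : ∀ N, d ≤ N → q.coeff N = 0 := by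
      intro N hN
      rcases hN.eq_or_lt with rfl | hlt
      · have hlead := (hA d).coeff_natDegree
        rw [hAdeg] at hlead
        simp [q, hlead]
      · simp [q, coeff_eq_zero_of_natDegree_lt (hp.trans_lt hlt),
          coeff_eq_zero_of_natDegree_lt ((hAdeg d).trans_lt hlt)]
    have hrest : Tendsto (fun n : ℕ => E n q / (n : ℝ) ^ (c * d)) atTop (𝓝 0) := by
      rcases d with _ | d
      · have hq0 : q = 0 := Polynomial.ext fun N => by simpa using hq N N.zero_le
        simp [hq0]
      · have hlow := (ih d d.lt_succ_self (natDegree_le_iff_coeff_eq_zero.mpr hq)).mul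
          ((tendsto_rpow_neg_atTop hc).comp tendsto_natCast_atTop_atTop)
        rw [mul_zero] at hlow
        refine hlow.congr' ?_
        filter_upwards [eventually_gt_atTop 0] with n hn
        have hn' : (0 : ℝ) < n := by exact_mod_cast hn
        rw [Function.comp_apply, Nat.cast_succ, mul_add_one, Real.rpow_add hn',
          Real.rpow_neg hn'.le]
        field_simp
    have hsplit : ∀ n, E n p = p.coeff d * E n (A d) + E n q := by
      intro n
      simp only [q, map_sub, C_mul', map_smul, smul_eq_mul]
      ring
    have h := ((hE d).const_mul (p.coeff d)).add hrest
    rw [add_zero] at h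
    refine h.congr fun n => ?_
    rw [hsplit, add_div, mul_div_assoc]

namespace Real

theorem Gamma_natCast_add_one_add {x : ℝ} (hx : 0 < x) (n : ℕ) :
    Gamma (n + 1 + x) = Gamma x * ∏ i ∈ range (n + 1), (x + i) := by
  induction n with
  | zero => simp [add_comm, Gamma_add_one hx.ne', mul_comm]
  | succ n ih =>
    push_cast
    rw [show (n : ℝ) + 1 + 1 + x = (n + 1 + x) + 1 by ring, Gamma_add_one (by positivity), ih,
      prod_range_succ _ (n + 1)]
    push_cast
    ring

theorem tendsto_Gamma_natCast_add_one_add_div {x : ℝ} (hx : -1 < x) :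
    Tendsto (fun n : ℕ => Gamma (n + 1 + x) / ((n : ℝ) ^ x * n.factorial)) atTop (𝓝 1) := by
  -- Euler's limit formula at `x + 1 > 0`, shifted back by `Γ(y + 1) = y Γ(y)`.
  have hx1 : 0 < x + 1 := by linarith
  have hseq := (tendsto_const_nhds (x := Gamma (x + 1))).div (GammaSeq_tendsto_Gamma (x + 1))
    (Gamma_pos_of_pos hx1).ne'
  rw [div_self (Gamma_pos_of_pos hx1).ne'] at hseq
  have hlim := hseq.mul (tendsto_natCast_div_add_atTop (1 + x))
  rw [mul_one] at hlim
  refine hlim.congr' ?_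
  filter_upwards [eventually_gt_atTop 0] with n hn
  have hn' : (0 : ℝ) < n := by exact_mod_cast hn
  have h1 : (0 : ℝ) < n + 1 + x := by linarith
  rw [Pi.div_apply, GammaSeq, div_div_eq_mul_div, ← Gamma_natCast_add_one_add hx1,
    show (n : ℝ) + 1 + (x + 1) = (n + 1 + x) + 1 by ring, Gamma_add_one h1.ne',
    rpow_add_one hn'.ne']
  field_simp [show (n : ℝ) + (1 + x) ≠ 0 by linarith]
  ring

theorem tendsto_Gamma_natCast_add_one_add_div_Gamma {x y : ℝ} (hx : -1 < x) (hy : -1 < y) :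
    Tendsto (fun n : ℕ => Gamma (n + 1 + x) / Gamma (n + 1 + y) / (n : ℝ) ^ (x - y)) atTop
      (𝓝 1) := by
  have h := (tendsto_Gamma_natCast_add_one_add_div hx).div
    (tendsto_Gamma_natCast_add_one_add_div hy) one_ne_zero
  rw [div_one] at h
  refine h.congr' ?_
  filter_upwards [eventually_gt_atTop 0] with n hn
  have hn' : (0 : ℝ) < n := by exact_mod_cast hn
  have hΓ : 0 < Gamma (n + 1 + y) := Gamma_pos_of_pos (by linarith)
  rw [Pi.div_apply, rpow_sub hn']
  field_simp [(rpow_pos_of_pos hn' x).ne', (rpow_pos_of_pos hn' y).ne', hΓ.ne']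

end Real

theorem gbinom_eq_eval_descPochhammer (x : ℝ) (n : ℕ) :
    gbinom x n = (descPochhammer ℝ n).eval x / n.factorial := by
  rw [gbinom, descPochhammer_eval_eq_prod_range]

theorem gbinom_zero (x : ℝ) : gbinom x 0 = 1 := by simp [gbinom]

theorem gbinom_succ (x : ℝ) (n : ℕ) : gbinom x (n + 1) = x * gbinom (x - 1) n / (n + 1) := by
  simp only [gbinom_eq_eval_descPochhammer, descPochhammer_succ_left, eval_mul, eval_X, eval_comp,
    eval_sub, eval_one, Nat.factorial_succ]
  push_cast
  field_simp

theorem gbinom_natCast_sub_pos {c : ℝ} (hc : c < 1) (n : ℕ) : 0 < gbinom (n - c) n := by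
  refine div_pos (prod_pos fun i hi => ?_) (by positivity)
  have : (i : ℝ) + 1 ≤ n := by exact_mod_cast mem_range.mp hi
  linarith

theorem exists_eval_eq_gbinom_sub_mul (a b : ℝ) (n : ℕ) :
    ∃ P : ℝ[X], P.natDegree ≤ n ∧ ∀ x, P.eval x = gbinom (a - b * x) n := by
  refine ⟨C (n.factorial : ℝ)⁻¹ * (descPochhammer ℝ n).comp (C a - C b * X), ?_, fun x => ?_⟩
  · refine (natDegree_C_mul_le _ _).trans (natDegree_comp_le.trans ?_)
    rw [descPochhammer_natDegree]
    have : (C a - C b * X).natDegree ≤ 1 := by compute_degree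
    simpa using Nat.mul_le_mul_left n this
  · simp [gbinom_eq_eval_descPochhammer, div_eq_inv_mul]

section OutDegree

variable (c : ℝ)

noncomputable def degreeSum (n j m : ℕ) : ℝ :=
  altBinomSum (fun ℓ => gbinom (n - c * (2 + ℓ)) (n - j)) m

noncomputable def degreeNormalizer (n j : ℕ) : ℝ :=
  gbinom (j - c) j / (gbinom (n - c) n * n.choose j)

noncomputable def degreeProb (n j m : ℕ) : ℝ :=
  degreeNormalizer c n j * degreeSum c n j m

theorem Pdeg_eq_degreeProb (k n j m : ℕ) : Pdeg k n j m = degreeProb (k / (k + 1)) n j m := by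
  simp only [Pdeg, degreeProb, degreeNormalizer, degreeSum, altBinomSum, div_mul_eq_mul_div]

theorem degreeSum_eq_zero {n j m : ℕ} (h : n - j < m) : degreeSum c n j m = 0 := by
  obtain ⟨P, hdeg, heval⟩ := exists_eval_eq_gbinom_sub_mul (n - 2 * c) c (n - j)
  have hP : (fun ℓ : ℕ => gbinom (n - c * (2 + ℓ)) (n - j)) = fun ℓ : ℕ => P.eval (ℓ : ℝ) := by
    ext ℓ
    rw [heval]
    ring_nf
  rw [degreeSum, hP]
  exact altBinomSum_eval_eq_zero (hdeg.trans_lt h)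

theorem degreeSum_self_zero (j : ℕ) : degreeSum c j j 0 = 1 := by
  simp [degreeSum, altBinomSum, gbinom_zero]

/-- The paper's recurrence for `T_{n,j,m}`, which is `degreeSum c n j m` up to a factor
depending only on `n` and `j`. -/
theorem degreeSum_succ {n j : ℕ} (hj : j ≤ n) (m : ℕ) :
    ((n : ℝ) + 1 - j) * degreeSum c (n + 1) j m
      = ((n : ℝ) + 1 - 2 * c - c * m) * degreeSum c n j m + c * m * degreeSum c n j (m - 1) := by
  set g : ℕ → ℝ := fun ℓ => gbinom (n - c * (2 + ℓ)) (n - j)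
  have hg : ∀ ℓ : ℕ, ((n : ℝ) + 1 - j) * gbinom ((n + 1 : ℕ) - c * (2 + ℓ)) (n + 1 - j)
      = ((n : ℝ) + 1 - 2 * c) * g ℓ - c * (ℓ * g ℓ) := by
    intro ℓ
    rw [Nat.sub_add_comm hj, gbinom_succ,
      show ((n + 1 : ℕ) : ℝ) - c * (2 + ℓ) - 1 = n - c * (2 + ℓ) by push_cast; ring]
    have hnj : ((n - j : ℕ) : ℝ) + 1 ≠ 0 := by positivity
    simp only [g]
    push_cast [Nat.cast_sub hj] at hnj ⊢
    field_simp
    ring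
  calc ((n : ℝ) + 1 - j) * degreeSum c (n + 1) j m
      = ((n : ℝ) + 1 - 2 * c) * altBinomSum g m - c * altBinomSum (fun ℓ => (ℓ : ℝ) * g ℓ) m := by
        simp only [degreeSum, altBinomSum, mul_sum, ← sum_sub_distrib]
        refine sum_congr rfl fun ℓ _ => ?_
        linear_combination ((m.choose ℓ : ℝ) * (-1) ^ ℓ) * hg ℓ
    _ = _ := by
        rw [altBinomSum_natCast_mul]
        simp only [degreeSum, g]
        ring

variable {c}

theorem degreeNormalizer_self (hc : c < 1) (j : ℕ) : degreeNormalizer c j j = 1 := by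
  rw [degreeNormalizer, Nat.choose_self, Nat.cast_one, mul_one,
    div_self (gbinom_natCast_sub_pos hc j).ne']

theorem degreeNormalizer_succ (hc : c < 1) {n j : ℕ} (hj : j ≤ n) :
    ((n : ℝ) + 1 - c) * degreeNormalizer c (n + 1) j
      = ((n : ℝ) + 1 - j) * degreeNormalizer c n j := by
  have hgb : gbinom ((n + 1 : ℕ) - c) (n + 1) = ((n : ℝ) + 1 - c) * gbinom (n - c) n / (n + 1) := by
    rw [gbinom_succ]
    push_cast
    ring_nf
  have hchoose := congrArg (Nat.cast : ℕ → ℝ) (Nat.choose_mul_succ_eq n j)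
  push_cast [Nat.cast_sub (hj.trans n.le_succ)] at hchoose
  have h1 := gbinom_natCast_sub_pos hc n
  have h2 : (0 : ℝ) < n.choose j := by exact_mod_cast Nat.choose_pos hj
  have h3 : (0 : ℝ) < (n + 1).choose j := by exact_mod_cast Nat.choose_pos (hj.trans n.le_succ)
  have h4 : (0 : ℝ) < n + 1 - c := by linarith [(n.cast_nonneg : (0 : ℝ) ≤ n)]
  rw [degreeNormalizer, degreeNormalizer, hgb]
  field_simp
  linear_combination (gbinom (j - c) j) * hchoose

theorem degreeProb_eq_zero {n j m : ℕ} (h : n - j < m) : degreeProb c n j m = 0 := by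
  rw [degreeProb, degreeSum_eq_zero c h, mul_zero]

end OutDegree

section Moments

noncomputable def shiftedPochhammer (s : ℕ) : ℝ[X] := (ascPochhammer ℝ s).comp (X + 1)

theorem monic_shiftedPochhammer (s : ℕ) : (shiftedPochhammer s).Monic := by
  simpa [shiftedPochhammer] using (monic_ascPochhammer ℝ s).comp_X_add_C 1

theorem natDegree_shiftedPochhammer (s : ℕ) : (shiftedPochhammer s).natDegree = s := by
  rw [shiftedPochhammer, natDegree_comp, ascPochhammer_natDegree, ← C_1, natDegree_X_add_C,
    mul_one]

theorem eval_shiftedPochhammer (s : ℕ) (x : ℝ) :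
    (shiftedPochhammer s).eval x = (ascPochhammer ℝ s).eval (x + 1) := by
  simp [shiftedPochhammer]

theorem add_one_mul_eval_add_one_shiftedPochhammer (s : ℕ) (x : ℝ) :
    (x + 1) * (shiftedPochhammer s).eval (x + 1) = (shiftedPochhammer s).eval x * (x + 1 + s) := by
  have h := congrArg (eval (x + 1)) (ascPochhammer_succ_left ℝ s)
  rw [ascPochhammer_succ_eval, eval_mul, eval_X, eval_comp] at h
  simp only [eval_shiftedPochhammer, eval_add, eval_X, eval_one] at h ⊢
  exact h.symm

variable (c : ℝ) (j : ℕ)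

noncomputable def degreeMoment (n : ℕ) : ℝ[X] →ₗ[ℝ] ℝ :=
  ∑ m ∈ range (n + 1), degreeProb c n j m • leval (m : ℝ)

theorem degreeMoment_apply (n : ℕ) (p : ℝ[X]) :
    degreeMoment c j n p = ∑ m ∈ range (n + 1), degreeProb c n j m * p.eval (m : ℝ) := by
  simp [degreeMoment]

noncomputable def risingSum (s n : ℕ) : ℝ :=
  ∑ m ∈ range (n + 1), (shiftedPochhammer s).eval (m : ℝ) * degreeSum c n j m

theorem degreeMoment_shiftedPochhammer_eq (s n : ℕ) :
    degreeMoment c j n (shiftedPochhammer s) = degreeNormalizer c n j * risingSum c j s n := by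
  rw [degreeMoment_apply, risingSum, mul_sum]
  exact sum_congr rfl fun m _ => by rw [degreeProb]; ring

theorem risingSum_succ {n : ℕ} (hj : j ≤ n) (s : ℕ) :
    ((n : ℝ) + 1 - j) * risingSum c j s (n + 1)
      = ((n : ℝ) + 1 + c * (s - 1)) * risingSum c j s n := by
  set r : ℕ → ℝ := fun m => (shiftedPochhammer s).eval (m : ℝ)
  calc ((n : ℝ) + 1 - j) * risingSum c j s (n + 1)
      = ∑ m ∈ range (n + 2), r m * (((n : ℝ) + 1 - 2 * c - c * m) * degreeSum c n j m)
        + ∑ m ∈ range (n + 2), r m * (c * m * degreeSum c n j (m - 1)) := by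
        rw [risingSum, mul_sum, ← sum_add_distrib]
        exact sum_congr rfl fun m _ => by linear_combination r m * degreeSum_succ c hj m
    _ = ∑ m ∈ range (n + 1), r m * (((n : ℝ) + 1 - 2 * c - c * m) * degreeSum c n j m)
        + ∑ m ∈ range (n + 1), c * (r m * (m + 1 + s)) * degreeSum c n j m := by
        rw [sum_range_succ _ (n + 1), degreeSum_eq_zero c (by omega : n - j < n + 1),
          sum_range_succ' (fun m => r m * (c * m * degreeSum c n j (m - 1)))]
        simp only [mul_zero, add_zero, Nat.cast_zero, zero_mul, Nat.add_sub_cancel]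
        congr 1
        refine sum_congr rfl fun m _ => ?_
        rw [← add_one_mul_eval_add_one_shiftedPochhammer]
        simp only [r]
        push_cast
        ring
    _ = ((n : ℝ) + 1 + c * (s - 1)) * risingSum c j s n := by
        rw [risingSum, mul_sum, ← sum_add_distrib]
        exact sum_congr rfl fun m _ => by ring

variable {c j}

theorem degreeMoment_shiftedPochhammer_succ (hc : c < 1) {n : ℕ} (hj : j ≤ n) (s : ℕ) :
    ((n : ℝ) + 1 - c) * degreeMoment c j (n + 1) (shiftedPochhammer s)
      = ((n : ℝ) + 1 + c * (s - 1)) * degreeMoment c j n (shiftedPochhammer s) := by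
  rw [degreeMoment_shiftedPochhammer_eq, degreeMoment_shiftedPochhammer_eq]
  linear_combination risingSum c j s (n + 1) * degreeNormalizer_succ hc hj
    + degreeNormalizer c n j * risingSum_succ c j hj s

theorem degreeMoment_shiftedPochhammer_self (hc : c < 1) (s : ℕ) :
    degreeMoment c j j (shiftedPochhammer s) = s.factorial := by
  rw [degreeMoment_shiftedPochhammer_eq, degreeNormalizer_self hc, one_mul, risingSum,
    sum_eq_single 0]
  · simp [degreeSum_self_zero, eval_shiftedPochhammer, ascPochhammer_eval_one]
  · intro m _ hm
    rw [degreeSum_eq_zero c (by omega), mul_zero]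
  · simp

theorem degreeMoment_shiftedPochhammer (hc0 : 0 ≤ c) (hc1 : c < 1) (s : ℕ) {n : ℕ} (hj : j ≤ n) :
    degreeMoment c j n (shiftedPochhammer s)
      = s.factorial * Real.Gamma (j + 1 - c) / Real.Gamma (j + 1 + c * (s - 1))
        * (Real.Gamma (n + 1 + c * (s - 1)) / Real.Gamma (n + 1 - c)) := by
  have ha : -c ≤ c * (s - 1) := by nlinarith [mul_nonneg hc0 (Nat.cast_nonneg (α := ℝ) s)]
  have hpos : ∀ x : ℝ, 0 ≤ x → 0 < x + 1 - c ∧ 0 < x + 1 + c * (s - 1) := fun x hx =>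
    ⟨by linarith, by linarith⟩
  induction n, hj using Nat.le_induction with
  | base =>
    obtain ⟨h1, h2⟩ := hpos j j.cast_nonneg
    rw [degreeMoment_shiftedPochhammer_self hc1]
    field_simp [(Real.Gamma_pos_of_pos h1).ne', (Real.Gamma_pos_of_pos h2).ne']
  | succ n hn ih =>
    obtain ⟨h1, h2⟩ := hpos n n.cast_nonneg
    have hrec := degreeMoment_shiftedPochhammer_succ hc1 hn s
    rw [ih] at hrec
    apply mul_left_cancel₀ h1.ne'
    rw [hrec]
    push_cast
    rw [show (n : ℝ) + 1 + 1 + c * (s - 1) = (n + 1 + c * (s - 1)) + 1 by ring,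
      show (n : ℝ) + 1 + 1 - c = (n + 1 - c) + 1 by ring, Real.Gamma_add_one h2.ne',
      Real.Gamma_add_one h1.ne']
    field_simp [(Real.Gamma_pos_of_pos h1).ne']

end Moments

theorem tendsto_degreeMoment_shiftedPochhammer {c : ℝ} (hc0 : 0 ≤ c) (hc1 : c < 1) (j s : ℕ) :
    Tendsto (fun n : ℕ => degreeMoment c j n (shiftedPochhammer s) / (n : ℝ) ^ (c * s)) atTop
      (𝓝 (s.factorial * Real.Gamma (j + 1 - c) / Real.Gamma (j + 1 + c * (s - 1)))) := by
  have hx : -1 < c * (s - 1) := by nlinarith [mul_nonneg hc0 (Nat.cast_nonneg (α := ℝ) s)]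
  have h := (Real.tendsto_Gamma_natCast_add_one_add_div_Gamma hx (by linarith : -1 < -c)).const_mul
    (s.factorial * Real.Gamma (j + 1 - c) / Real.Gamma (j + 1 + c * (s - 1)))
  rw [mul_one] at h
  refine h.congr' ?_
  filter_upwards [eventually_ge_atTop j] with n hn
  rw [degreeMoment_shiftedPochhammer hc0 hc1 s hn, show c * (s - 1) - -c = c * s by ring,
    ← sub_eq_add_neg]
  ring

theorem ktree_outdegree_moments_general (k j : ℕ) (hk : 1 ≤ k) (s : ℕ) :
    Tendsto (fun n : ℕ =>
        (∑' m : ℕ, (m : ℝ) ^ s * Pdeg k n j m) / (n : ℝ) ^ (((k : ℝ) * s) / ((k : ℝ) + 1)))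
      atTop
      (nhds ((Nat.factorial s : ℝ) * Real.Gamma ((j : ℝ) + 1 / ((k : ℝ) + 1))
        / Real.Gamma ((j : ℝ) + 1 + (k : ℝ) * ((s : ℝ) - 1) / ((k : ℝ) + 1)))) := by
  set c : ℝ := k / (k + 1) with hc
  have hc0 : 0 < c := div_pos (by exact_mod_cast hk) (by positivity)
  have hc1 : c < 1 := (div_lt_one (by positivity)).mpr (by linarith)
  have hmoment : ∀ n : ℕ, ∑' m : ℕ, (m : ℝ) ^ s * Pdeg k n j m = degreeMoment c j n (X ^ s) := by
    intro n
    rw [tsum_eq_sum (s := range (n + 1)) fun m hm => ?_, degreeMoment_apply]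
    · exact sum_congr rfl fun m _ => by rw [Pdeg_eq_degreeProb, eval_pow, eval_X, mul_comm]
    · rw [Pdeg_eq_degreeProb, degreeProb_eq_zero (by simp at hm; omega), mul_zero]
  have hlim := tendsto_div_rpow_of_natDegree_le hc0 monic_shiftedPochhammer
    natDegree_shiftedPochhammer (tendsto_degreeMoment_shiftedPochhammer hc0.le hc1 j) s
    (natDegree_X_pow_le s)
  rw [coeff_X_pow_self, one_mul] at hlim
  have hexp : (k : ℝ) * s / (k + 1) = c * s := by rw [hc, div_mul_eq_mul_div]
  have harg : (j : ℝ) + 1 / (k + 1) = j + 1 - c := by rw [hc]; field_simp; ring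
  have harg' : (j : ℝ) + 1 + k * (s - 1) / (k + 1) = j + 1 + c * (s - 1) := by
    rw [hc, div_mul_eq_mul_div]
  simpa only [hexp, harg, harg', hmoment] using hlim

/-- For fixed `j ≥ 1`, the `s`-th moment of `Y_{n,j}` satisfies
`E(Y_{n,j}^s)/n^{ks/(k+1)} → s! Γ(j+1/(k+1))/Γ(j+1+k(s-1)/(k+1))`. -/
theorem ktree_outdegree_moments (k j : ℕ) (hk : 1 ≤ k) (hj : 1 ≤ j) (s : ℕ) :
    Tendsto (fun n : ℕ =>
        (∑' m : ℕ, (m : ℝ) ^ s * Pdeg k n j m) / (n : ℝ) ^ (((k : ℝ) * s) / ((k : ℝ) + 1)))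
      atTop
      (nhds ((Nat.factorial s : ℝ) * Real.Gamma ((j : ℝ) + 1 / ((k : ℝ) + 1))
        / Real.Gamma ((j : ℝ) + 1 + (k : ℝ) * ((s : ℝ) - 1) / ((k : ℝ) + 1)))) :=
  ktree_outdegree_moments_general k j hk s
end

section
/- If j = j(n) satisfies n - j = o(n) and j → ∞, then P{Y_{n,j} = 0} → 1 as n → ∞. -/
open Filter

/-! With `c = k/(k+1)`, the subset-of-a-subset identity `C(x,n) C(n,j) = C(x,n-j) C(x-(n-j),j)`
collapses `P{Y_{n,j} = 0}` to `C(n-2c, n-j) / C(n-c, n-j) = ∏_{i<n-j} (1 - c/(n-c-i))`.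
Every factor lies in `[1 - 1/j, 1]`, so by Bernoulli's inequality the probability lies in
`[1 - (n-j)/j, 1]`, and `(n-j)/j → 0` when `n - j = o(n)`. -/

open Finset

theorem gbinom_eq_ringChoose (x : ℝ) (n : ℕ) : gbinom x n = Ring.choose x n := by
  rw [Ring.choose_eq_smul, gbinom, ← descPochhammer_eval_eq_prod_range, smul_eq_mul,
    inv_mul_eq_div, ← Polynomial.aeval_eq_smeval, ← descPochhammer_map (algebraMap ℤ ℝ),
    Polynomial.eval_map, Polynomial.aeval_def]

theorem gbinom_mul_choose (x : ℝ) {n j : ℕ} (hj : j ≤ n) :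
    gbinom x n * n.choose j = gbinom x (n - j) * gbinom (x - (n - j : ℕ)) j := by
  have h := Ring.choose_smul_choose x (Nat.sub_le n j)
  rw [Nat.choose_symm hj, Nat.sub_sub_self hj, nsmul_eq_mul, mul_comm] at h
  simpa only [gbinom_eq_ringChoose] using h

theorem gbinom_pos {x : ℝ} {n : ℕ} (h : (n : ℝ) - 1 < x) : 0 < gbinom x n := by
  refine div_pos (prod_pos fun i hi ↦ ?_) (by positivity)
  have : (i : ℝ) + 1 ≤ n := by exact_mod_cast mem_range.1 hi
  linarith

theorem gbinom_div_gbinom (x y : ℝ) (m : ℕ) :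
    gbinom y m / gbinom x m = ∏ i ∈ range m, (y - i) / (x - i) := by
  rw [gbinom, gbinom, div_div_div_cancel_right₀ (by positivity), prod_div_distrib]

theorem Pdeg_zero_eq (k : ℕ) {n j : ℕ} (hj : j ≤ n) :
    Pdeg k n j 0 =
      gbinom (n - k / (k + 1) - k / (k + 1)) (n - j) / gbinom (n - k / (k + 1)) (n - j) := by
  have h2 : (n : ℝ) - k * (2 + ((0 : ℕ) : ℝ)) / (k + 1) = n - k / (k + 1) - k / (k + 1) := by
    push_cast; ring
  rw [Pdeg, sum_range_one, h2, gbinom_mul_choose _ hj]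
  set c : ℝ := k / (k + 1)
  have hc1 : c < 1 := (div_lt_one (by positivity)).2 (by linarith)
  have hx : (n : ℝ) - c - (n - j : ℕ) = j - c := by rw [Nat.cast_sub hj]; ring
  have hpos : 0 < gbinom (j - c) j := gbinom_pos (by linarith)
  simp only [hx, Nat.choose_zero_right, pow_zero, Nat.cast_one, one_mul]
  field_simp

section RatioBounds

variable {c x y : ℝ} {m : ℕ}

theorem one_sub_inv_le_sub_div {z : ℝ} (hc : c ≤ 1) (hy : 0 < y) (hyz : y ≤ z) :
    1 - y⁻¹ ≤ (z - c) / z := by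
  have hz : 0 < z := hy.trans_le hyz
  have : c / z ≤ y⁻¹ := calc
    c / z ≤ 1 / z := by gcongr
    _ ≤ y⁻¹ := by rw [one_div]; gcongr
  rw [sub_div, div_self hz.ne']
  linarith

theorem one_sub_div_le_gbinom_sub_div_gbinom (hc : c ≤ 1) (hy : 1 ≤ y) (hyx : y + m ≤ x + 1) :
    1 - m / y ≤ gbinom (x - c) m / gbinom x m := by
  have hinv : y⁻¹ ≤ 1 := inv_le_one_of_one_le₀ hy
  calc 1 - m / y = 1 + m * (-y⁻¹) := by ring
    _ ≤ (1 + -y⁻¹) ^ m := one_add_mul_le_pow (by linarith) m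
    _ = ∏ _i ∈ range m, (1 - y⁻¹) := by rw [prod_const, card_range, sub_eq_add_neg]
    _ ≤ ∏ i ∈ range m, (x - c - i) / (x - i) := by
      refine prod_le_prod (fun _ _ ↦ by linarith) fun i hi ↦ ?_
      have : (i : ℝ) + 1 ≤ m := by exact_mod_cast mem_range.1 hi
      rw [sub_right_comm]
      exact one_sub_inv_le_sub_div hc (by linarith) (by linarith)
    _ = gbinom (x - c) m / gbinom x m := (gbinom_div_gbinom x (x - c) m).symm

theorem gbinom_sub_div_gbinom_le_one (hc : 0 ≤ c) (hcx : c + m ≤ x + 1) :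
    gbinom (x - c) m / gbinom x m ≤ 1 := by
  have hci : ∀ i ∈ range m, c ≤ x - i := fun i hi ↦ by
    have : (i : ℝ) + 1 ≤ m := by exact_mod_cast mem_range.1 hi
    linarith
  rw [gbinom_div_gbinom]
  refine prod_le_one (fun i hi ↦ div_nonneg ?_ ?_) fun i hi ↦ div_le_one_of_le₀ ?_ ?_ <;>
    linarith [hci i hi]

end RatioBounds

theorem one_sub_div_le_Pdeg_zero (k : ℕ) {n j : ℕ} (hj : 1 ≤ j) (hjn : j ≤ n) :
    1 - ((n - j : ℕ) : ℝ) / j ≤ Pdeg k n j 0 := by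
  have hc : (k : ℝ) / (k + 1) ≤ 1 := div_le_one_of_le₀ (by linarith) (by positivity)
  rw [Pdeg_zero_eq k hjn]
  refine one_sub_div_le_gbinom_sub_div_gbinom hc (by exact_mod_cast hj) ?_
  rw [Nat.cast_sub hjn]
  linarith

theorem Pdeg_zero_le_one (k : ℕ) {n j : ℕ} (hj : 1 ≤ j) (hjn : j ≤ n) :
    Pdeg k n j 0 ≤ 1 := by
  have hc : (k : ℝ) / (k + 1) < 1 := (div_lt_one (by positivity)).2 (by linarith)
  have hj' : (1 : ℝ) ≤ j := by exact_mod_cast hj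
  rw [Pdeg_zero_eq k hjn]
  refine gbinom_sub_div_gbinom_le_one (by positivity) ?_
  rw [Nat.cast_sub hjn]
  linarith

theorem ktree_outdegree_large_general (k : ℕ) (j : ℕ → ℕ) (hle : ∀ n, j n ≤ n)
    (ho : Tendsto (fun n : ℕ => ((n - j n : ℕ) : ℝ) / n) atTop (nhds 0))
    (hjinf : Tendsto j atTop atTop) :
    Tendsto (fun n : ℕ => Pdeg k n (j n) 0) atTop (nhds 1) := by
  have hratio : Tendsto (fun n ↦ ((n - j n : ℕ) : ℝ) / j n) atTop (nhds 0) := by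
    have h := ho.div (tendsto_const_nhds.sub ho) (by norm_num : (1 : ℝ) - 0 ≠ 0)
    rw [zero_div] at h
    refine h.congr' ?_
    filter_upwards [hjinf.eventually_ge_atTop 1] with n hn
    have hn0 : (n : ℝ) ≠ 0 := by exact_mod_cast (Nat.lt_of_lt_of_le hn (hle n)).ne'
    rw [Pi.div_apply, Nat.cast_sub (hle n), one_sub_div hn0, sub_sub_cancel,
      div_div_div_cancel_right₀ hn0]
  have hlower : Tendsto (fun n ↦ 1 - ((n - j n : ℕ) : ℝ) / j n) atTop (nhds 1) := by
    simpa using tendsto_const_nhds.sub hratio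
  refine tendsto_of_tendsto_of_tendsto_of_le_of_le' hlower tendsto_const_nhds ?_ ?_ <;>
    filter_upwards [hjinf.eventually_ge_atTop 1] with n hn
  · exact one_sub_div_le_Pdeg_zero k hn (hle n)
  · exact Pdeg_zero_le_one k hn (hle n)

/-- Large region: if `j(n) → ∞` and `n - j(n) = o(n)`, then `P{Y_{n,j} = 0} → 1`. -/
theorem ktree_outdegree_large (k : ℕ) (hk : 1 ≤ k) (j : ℕ → ℕ) (hle : ∀ n, j n ≤ n)
    (ho : Tendsto (fun n : ℕ => ((n - j n : ℕ) : ℝ) / n) atTop (nhds 0))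
    (hjinf : Tendsto j atTop atTop) :
    Tendsto (fun n : ℕ => Pdeg k n (j n) 0) atTop (nhds 1) :=
  ktree_outdegree_large_general k j hle ho hjinf
end
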